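/- arXiv:math/0403125 — 3 statements merged into one kernel-verified Lean document; each statement's English description precedes it below -/
import Mathlib

section
/- Let G = G₁ *_H G₂ be a free product with amalgamation. Suppose H is malnormal in G₂. If g ∈ G and h, h₁ ∈ H with ghg⁻¹ = h₁ ≠ 1, then g ∈ G₁. Consequently, H ∩ gHg⁻¹ ≠ {1} implies g ∈ G₁. -/
open Monoid

namespace MyAux

open Monoid.PushoutI Monoid.CoprodI

variable {H : Type*} [Group H] {K : Bool → Type*} [∀ i, Group (K i)] {φ : ∀ i, H →* K i}

/-- Product in the pushout of a list of letters. -/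
def lprod (φ : ∀ i, H →* K i) (l : List ((i : Bool) × K i)) : PushoutI φ :=
  (l.map fun p => PushoutI.of (φ := φ) p.1 p.2).prod

@[simp] lemma lprod_nil : lprod φ [] = 1 := rfl

lemma lprod_cons (p : (i : Bool) × K i) (l : List ((i : Bool) × K i)) :
    lprod φ (p :: l) = PushoutI.of (φ := φ) p.1 p.2 * lprod φ l := by
  simp [lprod]

lemma lprod_append (l₁ l₂ : List ((i : Bool) × K i)) :
    lprod φ (l₁ ++ l₂) = lprod φ l₁ * lprod φ l₂ := by
  simp [lprod]

lemma lprod_singleton (p : (i : Bool) × K i) :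
    lprod φ [p] = PushoutI.of (φ := φ) p.1 p.2 := by
  simp [lprod]

lemma lprod_revinv (l : List ((i : Bool) × K i)) :
    lprod φ (l.reverse.map fun p => ⟨p.1, p.2⁻¹⟩) = (lprod φ l)⁻¹ := by
  induction l with
  | nil => simp
  | cons p l ih =>
    rw [List.reverse_cons, List.map_append, lprod_append, ih, lprod_cons]
    simp [lprod, mul_inv_rev]

lemma lprod_word (w : Word K) : ofCoprodI (Word.prod w) = lprod φ w.toList := by
  rw [Word.prod, lprod, map_list_prod, List.map_map]
  congr 1

lemma chain_fst_revinv (l : List ((i : Bool) × K i))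
    (h : l.Chain' (fun a b => a.1 ≠ b.1)) :
    (l.reverse.map fun p => (⟨p.1, p.2⁻¹⟩ : (i : Bool) × K i)).Chain'
      (fun a b => a.1 ≠ b.1) := by
  simp only [List.Chain']
  rw [List.isChain_map, List.isChain_reverse]
  exact List.IsChain.imp (fun a b hab => Ne.symm hab) h

lemma chain_concat_of_chain_concat (L : List ((i : Bool) × K i)) (j : Bool) (c y : K j)
    (h : (L ++ [(⟨j, c⟩ : (i : Bool) × K i)]).Chain' (fun a b => a.1 ≠ b.1)) :
    (L ++ [(⟨j, y⟩ : (i : Bool) × K i)]).Chain' (fun a b => a.1 ≠ b.1) := by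
  simp only [List.Chain'] at h ⊢
  rw [List.isChain_append] at h ⊢
  refine ⟨h.1, List.isChain_singleton _, fun a ha b hb => ?_⟩
  simp only [List.head?_cons, Option.mem_def, Option.some.injEq] at hb
  subst hb
  exact h.2.2 a ha ⟨j, c⟩ rfl

lemma conj_step (L : List ((i : Bool) × K i)) (j : Bool) (c : K j) (h : H) :
    lprod φ (L ++ [(⟨j, c⟩ : (i : Bool) × K i)]) * PushoutI.base φ h *
      (lprod φ (L ++ [(⟨j, c⟩ : (i : Bool) × K i)]))⁻¹ =
    lprod φ L * PushoutI.of (φ := φ) j (c * φ j h * c⁻¹) * (lprod φ L)⁻¹ := by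
  rw [lprod_append, lprod_singleton, ← PushoutI.of_apply_eq_base φ j h]
  simp only [map_mul, map_inv, mul_inv_rev, mul_assoc]

/-- Key normal-form lemma: conjugating a non-base letter by a reduced word stays
out of the base group. -/
lemma conj_notin_base (hφ : ∀ i, Function.Injective (φ i))
    (l : List ((i : Bool) × K i)) (i : Bool) (x : K i)
    (hne : ∀ p ∈ l, p.2 ≠ 1)
    (hred : ∀ p ∈ l, p.2 ∉ (φ p.1).range)
    (hchain : (l ++ [(⟨i, x⟩ : (i : Bool) × K i)]).Chain' (fun a b => a.1 ≠ b.1))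
    (hx : x ∉ (φ i).range) :
    lprod φ l * PushoutI.of (φ := φ) i x * (lprod φ l)⁻¹ ∉ (PushoutI.base φ).range := by
  have hx1 : x ≠ 1 := fun h => hx (h ▸ one_mem _)
  set rev : List ((i : Bool) × K i) := l.reverse.map fun p => ⟨p.1, p.2⁻¹⟩ with hrev
  have hrevmem : ∀ p ∈ rev, ∃ q ∈ l, p = ⟨q.1, q.2⁻¹⟩ := by
    intro p hp
    rw [hrev, List.mem_map] at hp
    rcases hp with ⟨q, hq, rfl⟩
    exact ⟨q, List.mem_reverse.mp hq, rfl⟩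
  have hchain_l : l.Chain' (fun a b => a.1 ≠ b.1) :=
    (List.isChain_append.mp hchain).1
  have hlink : ∀ q ∈ l.getLast?, q.1 ≠ i := by
    intro q hq
    exact (List.isChain_append.mp hchain).2.2 q hq ⟨i, x⟩ rfl
  have hchain_full : ((l ++ [(⟨i, x⟩ : (i : Bool) × K i)]) ++ rev).Chain'
      (fun a b => a.1 ≠ b.1) := by
    simp only [List.Chain']
    rw [List.isChain_append]
    refine ⟨hchain, hrev ▸ chain_fst_revinv l hchain_l, ?_⟩
    intro a ha b hb
    rw [List.getLast?_concat] at ha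
    simp only [Option.mem_def, Option.some.injEq] at ha
    subst ha
    rw [hrev, List.head?_map, List.head?_reverse] at hb
    simp only [Option.mem_def, Option.map_eq_some_iff] at hb
    rcases hb with ⟨q, hq, rfl⟩
    exact Ne.symm (hlink q hq)
  let u : Word K :=
    { toList := (l ++ [(⟨i, x⟩ : (i : Bool) × K i)]) ++ rev
      ne_one := by
        intro p hp
        rcases List.mem_append.mp hp with hp | hp
        · rcases List.mem_append.mp hp with hp | hp
          · exact hne p hp
          · rcases List.mem_singleton.mp hp with rfl
            exact hx1
        · rcases hrevmem p hp with ⟨q, hq, rfl⟩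
          simpa using hne q hq
      chain_ne := hchain_full }
  have hured : Reduced φ u := by
    intro p hp
    rcases List.mem_append.mp hp with hp | hp
    · rcases List.mem_append.mp hp with hp | hp
      · exact hred p hp
      · rcases List.mem_singleton.mp hp with rfl
        exact hx
    · rcases hrevmem p hp with ⟨q, hq, rfl⟩
      simpa using hred q hq
  intro hmem
  have hprod : ofCoprodI (Word.prod u) =
      lprod φ l * PushoutI.of (φ := φ) i x * (lprod φ l)⁻¹ := by
    rw [lprod_word]
    show lprod φ ((l ++ [(⟨i, x⟩ : (i : Bool) × K i)]) ++ rev) = _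
    rw [lprod_append, lprod_append, lprod_singleton, hrev, lprod_revinv]
  have hemp := hured.eq_empty_of_mem_range hφ (hprod ▸ hmem)
  have hlist : u.toList = [] := by rw [hemp]; rfl
  simp [u] at hlist

/-- Main claim at the level of reduced lists. -/
lemma list_mem_of_conj (hφ : ∀ i, Function.Injective (φ i))
    (hmal : ∀ x : K false, x ∉ (φ false).range →
      ∀ h : H, h ≠ 1 → x * (φ false h) * x⁻¹ ∉ (φ false).range)
    (l : List ((i : Bool) × K i))
    (hne : ∀ p ∈ l, p.2 ≠ 1)
    (hred : ∀ p ∈ l, p.2 ∉ (φ p.1).range)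
    (hchain : l.Chain' (fun a b => a.1 ≠ b.1))
    (h : H) (hne1 : h ≠ 1)
    (hmem : lprod φ l * PushoutI.base φ h * (lprod φ l)⁻¹ ∈ (PushoutI.base φ).range) :
    lprod φ l ∈ (PushoutI.of (φ := φ) true).range := by
  rcases l.eq_nil_or_concat with rfl | ⟨L, a, rfl⟩
  · rw [lprod_nil]
    exact one_mem _
  rw [List.concat_eq_append] at hne hred hchain hmem ⊢
  obtain ⟨j, c⟩ := a
  have hcl : c ∉ (φ j).range := hred ⟨j, c⟩ (by simp)
  rw [conj_step] at hmem
  have hLne : ∀ p ∈ L, p.2 ≠ 1 := fun p hp => hne p (by simp [hp])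
  have hLred : ∀ p ∈ L, p.2 ∉ (φ p.1).range := fun p hp => hred p (by simp [hp])
  by_cases hyr : c * φ j h * c⁻¹ ∈ (φ j).range
  · rcases hyr with ⟨h₂, hh₂⟩
    have hh₂ne : h₂ ≠ 1 := by
      rintro rfl
      rw [map_one] at hh₂
      have h4 := congrArg (fun z => c⁻¹ * z * c) hh₂
      simp only [mul_one, inv_mul_cancel, mul_assoc, inv_mul_cancel_left] at h4
      have h3 : φ j h = 1 := by
        have := h4.symm
        simpa [mul_assoc] using this
      exact hne1 (hφ j (by rw [h3, map_one]))
    cases j with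
    | false => exact absurd ⟨h₂, hh₂⟩ (hmal c hcl h hne1)
    | true =>
      have hmem2 : lprod φ L * PushoutI.base φ h₂ * (lprod φ L)⁻¹
          ∈ (PushoutI.base φ).range := by
        rw [← PushoutI.of_apply_eq_base φ true h₂, hh₂]
        exact hmem
      rcases L.eq_nil_or_concat with rfl | ⟨L', b, rfl⟩
      · rw [List.nil_append, lprod_singleton]
        exact MonoidHom.mem_range.mpr ⟨c, rfl⟩
      rw [List.concat_eq_append] at hLne hLred hmem2 hchain ⊢
      obtain ⟨k, c'⟩ := b
      have hk : k = false := by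
        have h5 := (List.isChain_append.mp hchain).2.2 ⟨k, c'⟩
          (by rw [List.getLast?_concat]; rfl) ⟨true, c⟩ rfl
        cases k
        · rfl
        · exact absurd rfl h5
      subst hk
      have hc' : c' ∉ (φ false).range := hLred ⟨false, c'⟩ (by simp)
      have hy2 : c' * φ false h₂ * c'⁻¹ ∉ (φ false).range := hmal c' hc' h₂ hh₂ne
      have hchain2 : (L' ++ [(⟨false, c' * φ false h₂ * c'⁻¹⟩ : (i : Bool) × K i)]).Chain'
          (fun a b => a.1 ≠ b.1) :=
        chain_concat_of_chain_concat L' false c' _ (List.isChain_append.mp hchain).1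
      have hcontra := conj_notin_base hφ L' false (c' * φ false h₂ * c'⁻¹)
        (fun p hp => hLne p (by simp [hp])) (fun p hp => hLred p (by simp [hp]))
        hchain2 hy2
      exfalso
      apply hcontra
      rw [← conj_step]
      exact hmem2
  · exact absurd hmem (conj_notin_base hφ L j _ hLne hLred
      (chain_concat_of_chain_concat L j c _ hchain) hyr)

end MyAux

/-- In an amalgamated free product `G = G₁ *_H G₂` (here `G₁ = K true`, `G₂ = K false`,
with `H` embedded via injective maps `φ`), if `H` is malnormal in `G₂` and
`g (base h) g⁻¹ = base h₁` with `h ≠ 1`, then `g` lies in `G₁`. -/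
theorem mem_G1_of_conj_in_H {H : Type*} [Group H] {K : Bool → Type*} [∀ i, Group (K i)]
    (φ : ∀ i, H →* K i) (hφ : ∀ i, Function.Injective (φ i))
    (hmal : ∀ x : K false, x ∉ (φ false).range →
      ∀ h : H, h ≠ 1 → x * (φ false h) * x⁻¹ ∉ (φ false).range)
    (g : PushoutI φ) (h h₁ : H) (hne : h ≠ 1)
    (hconj : g * PushoutI.base φ h * g⁻¹ = PushoutI.base φ h₁) :
    g ∈ (PushoutI.of (φ := φ) true).range := by
  classical
  obtain ⟨d⟩ := PushoutI.NormalWord.transversal_nonempty φ hφ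
  set w : PushoutI.NormalWord d := g • PushoutI.NormalWord.empty with hw
  have hgw : w.prod = g := by
    rw [hw, PushoutI.NormalWord.prod_smul, PushoutI.NormalWord.prod_empty, mul_one]
  have hred : ∀ p ∈ w.toList, p.2 ∉ (φ p.1).range := by
    rintro ⟨i, c⟩ hp ⟨k, hk⟩
    have hmem : c ∈ d.set i := w.normalized i c hp
    have hne1 : c ≠ 1 := w.ne_one ⟨i, c⟩ hp
    obtain ⟨⟨r, s⟩, -, huniq⟩ := (d.compl i).existsUnique c
    have e1 := huniq ⟨⟨c, ⟨k, hk⟩⟩, ⟨1, d.one_mem i⟩⟩ (mul_one c)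
    have e2 := huniq ⟨⟨1, ⟨1, map_one _⟩⟩, ⟨c, hmem⟩⟩ (one_mul c)
    rw [← e2] at e1
    have : (1 : K i) = c := congrArg (fun p => (p.2 : K i)) e1
    exact hne1 this.symm
  have hprod : g = PushoutI.base φ w.head * MyAux.lprod φ w.toList := by
    rw [← hgw, PushoutI.NormalWord.prod, MyAux.lprod_word]
  have hmem : MyAux.lprod φ w.toList * PushoutI.base φ h * (MyAux.lprod φ w.toList)⁻¹
      ∈ (PushoutI.base φ).range := by
    refine ⟨w.head⁻¹ * h₁ * w.head, ?_⟩
    have h6 : (PushoutI.base φ w.head * MyAux.lprod φ w.toList) * PushoutI.base φ h *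
        (PushoutI.base φ w.head * MyAux.lprod φ w.toList)⁻¹ = PushoutI.base φ h₁ := by
      rw [← hprod]; exact hconj
    have h7 := congrArg
      (fun z => (PushoutI.base φ w.head)⁻¹ * z * PushoutI.base φ w.head) h6
    simp only [mul_inv_rev, mul_assoc, inv_mul_cancel_left, mul_inv_cancel,
      mul_one, inv_mul_cancel] at h7
    rw [map_mul, map_mul, map_inv, mul_assoc, ← h7, mul_assoc]
  have hfin := MyAux.list_mem_of_conj hφ hmal w.toList w.ne_one hred w.chain_ne h hne hmem
  rw [hprod, ← PushoutI.of_apply_eq_base φ true w.head]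
  exact mul_mem (MonoidHom.mem_range.mpr ⟨φ true w.head, rfl⟩) hfin
end

section
/- In a δ-hyperbolic geodesic metric space, there exist D, C₁ depending only on δ such that if d(a,[b,c]) = d(a,b), d(d,[b,c]) = d(c,d), and d(b,c) ≥ D, then the concatenated path [a,b]∪[b,c]∪[c,d] is a (K,ε)-quasigeodesic for constants K, ε depending only on δ. -/
open Metric

/-- `γ` is a geodesic segment of length `T` (parametrized by arclength on `[0,T]`). -/
def IsGeodesicSegment {Z : Type*} [MetricSpace Z] (γ : ℝ → Z) (T : ℝ) : Prop :=
  0 ≤ T ∧ ∀ s t, s ∈ Set.Icc (0:ℝ) T → t ∈ Set.Icc (0:ℝ) T → dist (γ s) (γ t) = |s - t|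

/-- The image of a geodesic segment. -/
def geoImage {Z : Type*} [MetricSpace Z] (γ : ℝ → Z) (T : ℝ) : Set Z :=
  γ '' Set.Icc 0 T

/-- `Z` is a geodesic space: any two points are joined by a geodesic segment. -/
def IsGeodesicSpace (Z : Type*) [MetricSpace Z] : Prop :=
  ∀ x y : Z, ∃ γ T, IsGeodesicSegment γ T ∧ γ 0 = x ∧ γ T = y

/-- `Z` is `δ`-hyperbolic in the sense of Gromov (slim/thin triangles). -/
def SlimTriangles (Z : Type*) [MetricSpace Z] (δ : ℝ) : Prop :=
  ∀ (x y z : Z) (γ₁ γ₂ γ₃ : ℝ → Z) (T₁ T₂ T₃ : ℝ),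
    IsGeodesicSegment γ₁ T₁ → γ₁ 0 = x → γ₁ T₁ = y →
    IsGeodesicSegment γ₂ T₂ → γ₂ 0 = y → γ₂ T₂ = z →
    IsGeodesicSegment γ₃ T₃ → γ₃ 0 = x → γ₃ T₃ = z →
    ∀ p ∈ geoImage γ₃ T₃, infDist p (geoImage γ₁ T₁ ∪ geoImage γ₂ T₂) ≤ δ

/-- The arclength concatenation of three geodesic segments. -/
noncomputable def concat3 {Z : Type*} [MetricSpace Z] (γ₁ γ₂ γ₃ : ℝ → Z)
    (T₁ T₂ : ℝ) : ℝ → Z :=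
  fun t => if t ≤ T₁ then γ₁ t else if t ≤ T₁ + T₂ then γ₂ (t - T₁) else γ₃ (t - T₁ - T₂)

/-- A `(K,ε)`-quasigeodesic defined on `[0,T]`. -/
def IsQuasigeodesicOn {Z : Type*} [MetricSpace Z] (γ : ℝ → Z) (T K ε : ℝ) : Prop :=
  ∀ s t, s ∈ Set.Icc (0:ℝ) T → t ∈ Set.Icc (0:ℝ) T →
    (1 / K) * |s - t| - ε ≤ dist (γ s) (γ t) ∧ dist (γ s) (γ t) ≤ K * |s - t| + ε

lemma geo_mem {Z : Type*} [MetricSpace Z] {γ : ℝ → Z} {T t : ℝ} (ht : t ∈ Set.Icc (0:ℝ) T) :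
    γ t ∈ geoImage γ T := ⟨t, ht, rfl⟩

lemma geo_sub {Z : Type*} [MetricSpace Z] {γ : ℝ → Z} {T : ℝ} (h : IsGeodesicSegment γ T)
    {r : ℝ} (hr : r ∈ Set.Icc (0:ℝ) T) : IsGeodesicSegment γ r :=
  ⟨hr.1, fun s t hs ht => h.2 s t ⟨hs.1, hs.2.trans hr.2⟩ ⟨ht.1, ht.2.trans hr.2⟩⟩

lemma geoImage_mono {Z : Type*} [MetricSpace Z] {γ : ℝ → Z} {r T : ℝ} (hrT : r ≤ T) :
    geoImage γ r ⊆ geoImage γ T := Set.image_mono (Set.Icc_subset_Icc_right hrT)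

lemma geo_compact {Z : Type*} [MetricSpace Z] {γ : ℝ → Z} {T : ℝ} (h : IsGeodesicSegment γ T) :
    IsCompact (geoImage γ T) := by
  apply isCompact_Icc.image_of_continuousOn
  have : LipschitzOnWith 1 γ (Set.Icc 0 T) := by
    apply LipschitzOnWith.of_dist_le_mul
    intro x hx y hy
    rw [h.2 x y hx hy, Real.dist_eq, NNReal.coe_one, one_mul]
  exact this.continuousOn

lemma geo_nonempty {Z : Type*} [MetricSpace Z] {γ : ℝ → Z} {T : ℝ} (h : IsGeodesicSegment γ T) :
    (geoImage γ T).Nonempty := ⟨γ 0, geo_mem ⟨le_refl 0, h.1⟩⟩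

lemma near_point {Z : Type*} [MetricSpace Z] {S : Set Z} (hc : IsCompact S) (hn : S.Nonempty)
    {p : Z} {d : ℝ} (h : infDist p S ≤ d) : ∃ q ∈ S, dist p q ≤ d := by
  obtain ⟨q, hq, heq⟩ := hc.exists_infDist_eq_dist hn p
  exact ⟨q, hq, heq ▸ h⟩

lemma infDist_union_cases {Z : Type*} [MetricSpace Z] {S₁ S₂ : Set Z}
    (h₁ : IsCompact S₁) (h₂ : IsCompact S₂) (hn₁ : S₁.Nonempty) {p : Z} {d : ℝ}
    (h : infDist p (S₁ ∪ S₂) ≤ d) : infDist p S₁ ≤ d ∨ infDist p S₂ ≤ d := by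
  obtain ⟨q, hq, hdq⟩ := near_point (h₁.union h₂) (hn₁.mono Set.subset_union_left) h
  rcases hq with hq | hq
  · exact Or.inl ((infDist_le_dist_of_mem hq).trans hdq)
  · exact Or.inr ((infDist_le_dist_of_mem hq).trans hdq)

lemma geo_rev {Z : Type*} [MetricSpace Z] {γ : ℝ → Z} {T : ℝ} (h : IsGeodesicSegment γ T) :
    IsGeodesicSegment (fun t => γ (T - t)) T ∧ geoImage (fun t => γ (T - t)) T = geoImage γ T := by
  constructor
  · refine ⟨h.1, fun s t hs ht => ?_⟩
    have hs' : T - s ∈ Set.Icc (0:ℝ) T := ⟨by linarith [hs.2], by linarith [hs.1]⟩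
    have ht' : T - t ∈ Set.Icc (0:ℝ) T := ⟨by linarith [ht.2], by linarith [ht.1]⟩
    rw [h.2 _ _ hs' ht']
    rw [show T - s - (T - t) = -(s - t) by ring, abs_neg]
  · ext p
    constructor
    · rintro ⟨u, hu, rfl⟩
      exact ⟨T - u, ⟨by linarith [hu.2], by linarith [hu.1]⟩, rfl⟩
    · rintro ⟨u, hu, rfl⟩
      exact ⟨T - u, ⟨by linarith [hu.2], by linarith [hu.1]⟩, by simp⟩

lemma crossing {Z : Type*} [MetricSpace Z] {σ : ℝ → Z} {f d : ℝ} (hσ : IsGeodesicSegment σ f)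
    (S₁ S₂ : Set Z)
    (hcov : ∀ t ∈ Set.Icc (0:ℝ) f, infDist (σ t) S₁ ≤ d ∨ infDist (σ t) S₂ ≤ d)
    (h0 : infDist (σ 0) S₁ ≤ d) (hf : infDist (σ f) S₂ ≤ d) :
    ∃ s ∈ Set.Icc (0:ℝ) f, infDist (σ s) S₁ ≤ d ∧ infDist (σ s) S₂ ≤ d := by
  set A : Set ℝ := {t | t ∈ Set.Icc (0:ℝ) f ∧ infDist (σ t) S₁ ≤ d} with hA
  have hA0 : (0:ℝ) ∈ A := ⟨⟨le_refl 0, hσ.1⟩, h0⟩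
  have hAne : A.Nonempty := ⟨0, hA0⟩
  have hAbdd : BddAbove A := ⟨f, fun t ht => ht.1.2⟩
  set s := sSup A with hsdef
  have hs0 : 0 ≤ s := le_csSup hAbdd hA0
  have hsf : s ≤ f := csSup_le hAne fun t ht => ht.1.2
  have hsm : s ∈ Set.Icc (0:ℝ) f := ⟨hs0, hsf⟩
  refine ⟨s, hsm, ?_, ?_⟩
  · apply le_of_forall_pos_le_add
    intro ε hε
    obtain ⟨t, htA, hts⟩ := exists_lt_of_lt_csSup hAne (by linarith : s - ε < s)
    have hts' : t ≤ s := le_csSup hAbdd htA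
    calc infDist (σ s) S₁ ≤ infDist (σ t) S₁ + dist (σ s) (σ t) := infDist_le_infDist_add_dist
      _ ≤ d + ε := by
          rw [hσ.2 s t hsm htA.1, abs_of_nonneg (by linarith)]
          have := htA.2; linarith
  · rcases eq_or_lt_of_le hsf with heq | hlt
    · rw [heq]; exact hf
    · apply le_of_forall_pos_le_add
      intro ε hε
      set t := min (s + ε) f with htdef
      have hts : s < t := lt_min (by linarith) hlt
      have htm : t ∈ Set.Icc (0:ℝ) f := ⟨by linarith, min_le_right _ _⟩
      have htnA : t ∉ A := fun h => absurd (le_csSup hAbdd h) (not_le.mpr hts)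
      have h1 : ¬ infDist (σ t) S₁ ≤ d := fun h => htnA ⟨htm, h⟩
      have h2 : infDist (σ t) S₂ ≤ d := (hcov t htm).resolve_left h1
      calc infDist (σ s) S₂ ≤ infDist (σ t) S₂ + dist (σ s) (σ t) := infDist_le_infDist_add_dist
        _ ≤ d + ε := by
            rw [hσ.2 s t hsm htm, abs_of_nonpos (by linarith), neg_sub]
            have : t - s ≤ ε := by
              have := min_le_left (s + ε) f
              simp only [htdef] at *
              linarith
            linarith

/-- Key projection lemma: if `a` projects to `γ 0` on a geodesic `γ`, then for any `z`
on `γ`, `d(a,z) ≥ d(a, γ 0) + d(γ 0, z) - 8δ`. -/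
lemma lemmaP {Z : Type*} [MetricSpace Z] {δ : ℝ} (hδ : 0 ≤ δ) (hgeo : IsGeodesicSpace Z)
    (hslim : SlimTriangles Z δ) {γ : ℝ → Z} {T : ℝ} (hγ : IsGeodesicSegment γ T)
    {a : Z} (ha : infDist a (geoImage γ T) = dist a (γ 0)) :
    ∀ z ∈ geoImage γ T, dist a (γ 0) + dist (γ 0) z - 8*δ ≤ dist a z := by
  rintro z ⟨r, hr, rfl⟩
  obtain ⟨μ, U, hμ, hμ0, hμU⟩ := hgeo a (γ 0)
  obtain ⟨α, F, hα, hα0, hαF⟩ := hgeo a (γ r)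
  have hdaγ0 : dist a (γ 0) = U := by
    rw [← hμ0, ← hμU, hμ.2 0 U ⟨le_refl 0, hμ.1⟩ ⟨hμ.1, le_refl U⟩, abs_sub_comm, sub_zero,
      abs_of_nonneg hμ.1]
  have hdaγr : dist a (γ r) = F := by
    rw [← hα0, ← hαF, hα.2 0 F ⟨le_refl 0, hα.1⟩ ⟨hα.1, le_refl F⟩, abs_sub_comm, sub_zero,
      abs_of_nonneg hα.1]
  have hγr : IsGeodesicSegment γ r := geo_sub hγ hr
  have hslim' := hslim a (γ 0) (γ r) μ γ α U r F hμ hμ0 hμU hγr rfl rfl hα hα0 hαF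
  set S₁ := geoImage μ U with hS₁
  set S₂ := geoImage γ r with hS₂
  have hc₁ : IsCompact S₁ := geo_compact hμ
  have hc₂ : IsCompact S₂ := geo_compact hγr
  have hn₁ : S₁.Nonempty := geo_nonempty hμ
  have hn₂ : S₂.Nonempty := geo_nonempty hγr
  have hcov : ∀ t ∈ Set.Icc (0:ℝ) F, infDist (α t) S₁ ≤ δ ∨ infDist (α t) S₂ ≤ δ := by
    intro t ht
    exact infDist_union_cases hc₁ hc₂ hn₁ (hslim' (α t) (geo_mem ht))
  have h0 : infDist (α 0) S₁ ≤ δ := by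
    rw [hα0, ← hμ0]
    calc infDist (μ 0) S₁ ≤ dist (μ 0) (μ 0) := infDist_le_dist_of_mem (geo_mem ⟨le_refl 0, hμ.1⟩)
      _ = 0 := dist_self _
      _ ≤ δ := hδ
  have hf : infDist (α F) S₂ ≤ δ := by
    rw [hαF]
    calc infDist (γ r) S₂ ≤ dist (γ r) (γ r) := infDist_le_dist_of_mem (geo_mem ⟨hr.1, le_refl r⟩)
      _ = 0 := dist_self _
      _ ≤ δ := hδ
  obtain ⟨s, hsm, hs₁, hs₂⟩ := crossing hα S₁ S₂ hcov h0 hf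
  obtain ⟨q', hq'S, hq'd⟩ := near_point hc₁ hn₁ hs₁
  obtain ⟨q, hqS, hqd⟩ := near_point hc₂ hn₂ hs₂
  obtain ⟨t₁, ht₁, rfl⟩ := hq'S
  obtain ⟨t₂, ht₂, rfl⟩ := hqS
  -- distances along μ
  have d1 : dist a (μ t₁) = t₁ := by
    rw [← hμ0, hμ.2 0 t₁ ⟨le_refl 0, hμ.1⟩ ht₁, abs_sub_comm, sub_zero, abs_of_nonneg ht₁.1]
  have d2 : dist (μ t₁) (γ 0) = U - t₁ := by
    rw [← hμU, hμ.2 t₁ U ht₁ ⟨hμ.1, le_refl U⟩, abs_of_nonpos (by linarith [ht₁.2]), neg_sub]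
  -- distances along γ
  have d3 : dist (γ 0) (γ t₂) = t₂ := by
    have ht₂' : t₂ ∈ Set.Icc (0:ℝ) T := ⟨ht₂.1, ht₂.2.trans hr.2⟩
    rw [hγ.2 0 t₂ ⟨le_refl 0, hγ.1⟩ ht₂', abs_sub_comm, sub_zero, abs_of_nonneg ht₂.1]
  have d4 : dist (γ t₂) (γ r) = r - t₂ := by
    rw [hγr.2 t₂ r ht₂ ⟨hr.1, le_refl r⟩, abs_of_nonpos (by linarith [ht₂.2]), neg_sub]
  -- projection: a is at least U from q
  have d5 : U ≤ dist a (γ t₂) := by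
    rw [← hdaγ0, ← ha]
    exact infDist_le_dist_of_mem (geoImage_mono hr.2 (geo_mem ht₂))
  have d6 : dist (μ t₁) (γ t₂) ≤ 2*δ :=
    calc dist (μ t₁) (γ t₂) ≤ dist (μ t₁) (α s) + dist (α s) (γ t₂) := dist_triangle _ _ _
      _ ≤ 2*δ := by rw [dist_comm (μ t₁) (α s)]; linarith
  have d7 : U - t₁ ≤ 2*δ := by
    have := dist_triangle a (μ t₁) (γ t₂)
    linarith [d1 ▸ d6, d5]
  have d8 : t₂ ≤ 4*δ := by
    have := dist_triangle (γ 0) (μ t₁) (γ t₂)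
    rw [dist_comm (γ 0) (μ t₁)] at this
    linarith
  have d9 : dist a (α s) = s := by
    rw [← hα0, hα.2 0 s ⟨le_refl 0, hα.1⟩ hsm, abs_sub_comm, sub_zero, abs_of_nonneg hsm.1]
  have d10 : dist (α s) (γ r) = F - s := by
    rw [← hαF, hα.2 s F hsm ⟨hα.1, le_refl F⟩, abs_of_nonpos (by linarith [hsm.2]), neg_sub]
  have d11 : t₁ - δ ≤ s := by
    have := dist_triangle a (α s) (μ t₁)
    linarith [d1, d9]
  have d12 : r - t₂ - δ ≤ F - s := by
    have := dist_triangle (γ t₂) (α s) (γ r)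
    rw [dist_comm (γ t₂) (α s)] at this
    linarith [d4, d10]
  have hdγ0r : dist (γ 0) (γ r) = r := by
    rw [hγr.2 0 r ⟨le_refl 0, hr.1⟩ ⟨hr.1, le_refl r⟩, abs_sub_comm, sub_zero,
      abs_of_nonneg hr.1]
  rw [hdaγ0, hdγ0r, hdaγr]
  linarith

/-- Hard case: if `x` projects to `γ 0` and `y` projects to `γ T` on a long geodesic `γ`,
then `d(x,y) ≥ d(x, γ 0) + T + d(y, γ T) - 20δ`. -/
lemma lemmaH {Z : Type*} [MetricSpace Z] {δ : ℝ} (hδ : 0 ≤ δ) (hgeo : IsGeodesicSpace Z)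
    (hslim : SlimTriangles Z δ) {γ : ℝ → Z} {T : ℝ} (hγ : IsGeodesicSegment γ T)
    (hT : 12*δ + 1 ≤ T) {x y : Z}
    (hx : infDist x (geoImage γ T) = dist x (γ 0))
    (hy : infDist y (geoImage γ T) = dist y (γ T)) :
    dist x (γ 0) + T + dist y (γ T) - 20*δ ≤ dist x y := by
  obtain ⟨μ, U, hμ, hμ0, hμU⟩ := hgeo x (γ 0)
  obtain ⟨η, V, hη, hη0, hηV⟩ := hgeo (γ T) y
  obtain ⟨ρ, R, hρ, hρ0, hρR⟩ := hgeo x (γ T)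
  obtain ⟨σ, F, hσ, hσ0, hσF⟩ := hgeo x y
  -- basic lengths
  have hu : dist x (γ 0) = U := by
    rw [← hμ0, ← hμU, hμ.2 0 U ⟨le_refl 0, hμ.1⟩ ⟨hμ.1, le_refl U⟩, abs_sub_comm, sub_zero,
      abs_of_nonneg hμ.1]
  have hv : dist (γ T) y = V := by
    rw [← hη0, ← hηV, hη.2 0 V ⟨le_refl 0, hη.1⟩ ⟨hη.1, le_refl V⟩, abs_sub_comm, sub_zero,
      abs_of_nonneg hη.1]
  have hfF : dist x y = F := by
    rw [← hσ0, ← hσF, hσ.2 0 F ⟨le_refl 0, hσ.1⟩ ⟨hσ.1, le_refl F⟩, abs_sub_comm, sub_zero,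
      abs_of_nonneg hσ.1]
  have hbc : dist (γ 0) (γ T) = T := by
    rw [hγ.2 0 T ⟨le_refl 0, hγ.1⟩ ⟨hγ.1, le_refl T⟩, abs_sub_comm, sub_zero, abs_of_nonneg hγ.1]
  -- reversed γ
  obtain ⟨hγ', hγ'im⟩ := geo_rev hγ
  have hγ'0 : (fun t => γ (T - t)) 0 = γ T := by simp
  have hγ'T : (fun t => γ (T - t)) T = γ 0 := by simp
  -- slim triangles
  have slim1 := hslim x (γ T) y ρ η σ R V F hρ hρ0 hρR hη hη0 hηV hσ hσ0 hσF
  have slim2 := hslim x (γ 0) (γ T) μ γ ρ U T R hμ hμ0 hμU hγ rfl rfl hρ hρ0 hρR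
  set Sμ := geoImage μ U
  set Sγ := geoImage γ T
  set Sη := geoImage η V
  set Sρ := geoImage ρ R
  have hcμ : IsCompact Sμ := geo_compact hμ
  have hcγ : IsCompact Sγ := geo_compact hγ
  have hcη : IsCompact Sη := geo_compact hη
  have hcρ : IsCompact Sρ := geo_compact hρ
  have hnμ : Sμ.Nonempty := geo_nonempty hμ
  have hnγ : Sγ.Nonempty := geo_nonempty hγ
  have hnη : Sη.Nonempty := geo_nonempty hη
  have hnρ : Sρ.Nonempty := geo_nonempty hρ
  -- cover of σ by Sμ and Sγ ∪ Sη at scale 2δ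
  have hcov : ∀ t ∈ Set.Icc (0:ℝ) F,
      infDist (σ t) Sμ ≤ 2*δ ∨ infDist (σ t) (Sγ ∪ Sη) ≤ 2*δ := by
    intro t ht
    have h1 := slim1 (σ t) (geo_mem ht)
    rcases infDist_union_cases hcρ hcη hnρ h1 with h2 | h2
    · obtain ⟨q, hqρ, hqd⟩ := near_point hcρ hnρ h2
      have h3 := slim2 q hqρ
      rcases infDist_union_cases hcμ hcγ hnμ h3 with h4 | h4
      · left
        calc infDist (σ t) Sμ ≤ infDist q Sμ + dist (σ t) q := infDist_le_infDist_add_dist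
          _ ≤ 2*δ := by linarith
      · right
        calc infDist (σ t) (Sγ ∪ Sη) ≤ infDist q (Sγ ∪ Sη) + dist (σ t) q :=
              infDist_le_infDist_add_dist
          _ ≤ infDist q Sγ + dist (σ t) q :=
              add_le_add_left (infDist_le_infDist_of_subset Set.subset_union_left hnγ) _
          _ ≤ 2*δ := by linarith
    · right
      calc infDist (σ t) (Sγ ∪ Sη) ≤ infDist (σ t) Sη :=
            infDist_le_infDist_of_subset Set.subset_union_right hnη
        _ ≤ 2*δ := by linarith
  have h0 : infDist (σ 0) Sμ ≤ 2*δ := by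
    rw [hσ0, ← hμ0]
    calc infDist (μ 0) Sμ ≤ dist (μ 0) (μ 0) := infDist_le_dist_of_mem (geo_mem ⟨le_refl 0, hμ.1⟩)
      _ = 0 := dist_self _
      _ ≤ 2*δ := by linarith
  have hf : infDist (σ F) (Sγ ∪ Sη) ≤ 2*δ := by
    rw [hσF, ← hηV]
    calc infDist (η V) (Sγ ∪ Sη) ≤ dist (η V) (η V) :=
          infDist_le_dist_of_mem (Set.subset_union_right (geo_mem ⟨hη.1, le_refl V⟩))
      _ = 0 := dist_self _
      _ ≤ 2*δ := by linarith
  obtain ⟨s, hsm, hs₁, hs₂⟩ := crossing hσ Sμ (Sγ ∪ Sη) hcov h0 hf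
  obtain ⟨q'', hq''S, hq''d⟩ := near_point hcμ hnμ hs₁
  obtain ⟨q, hqS, hqd⟩ := near_point (hcγ.union hcη) (hnγ.mono Set.subset_union_left) hs₂
  obtain ⟨t₁, ht₁, rfl⟩ := hq''S
  have d1 : dist x (μ t₁) = t₁ := by
    rw [← hμ0, hμ.2 0 t₁ ⟨le_refl 0, hμ.1⟩ ht₁, abs_sub_comm, sub_zero, abs_of_nonneg ht₁.1]
  have d2 : dist (μ t₁) (γ 0) = U - t₁ := by
    rw [← hμU, hμ.2 t₁ U ht₁ ⟨hμ.1, le_refl U⟩, abs_of_nonpos (by linarith [ht₁.2]), neg_sub]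
  -- q'' projects to γ 0
  have hq''proj : infDist (μ t₁) Sγ = dist (μ t₁) (γ 0) := by
    apply le_antisymm (infDist_le_dist_of_mem (geo_mem ⟨le_refl 0, hγ.1⟩))
    obtain ⟨z, hz, hzd⟩ := hcγ.exists_infDist_eq_dist hnγ (μ t₁)
    rw [hzd, d2]
    have h5 : dist x (γ 0) ≤ dist x z := hx ▸ infDist_le_dist_of_mem hz
    have h6 := dist_triangle x (μ t₁) z
    rw [hu] at h5
    linarith [d1]
  have dq''q : dist (μ t₁) q ≤ 4*δ :=
    calc dist (μ t₁) q ≤ dist (μ t₁) (σ s) + dist (σ s) q := dist_triangle _ _ _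
      _ ≤ 4*δ := by rw [dist_comm (μ t₁) (σ s)]; linarith
  have d9 : dist x (σ s) = s := by
    rw [← hσ0, hσ.2 0 s ⟨le_refl 0, hσ.1⟩ hsm, abs_sub_comm, sub_zero, abs_of_nonneg hsm.1]
  have d10 : dist (σ s) y = F - s := by
    rw [← hσF, hσ.2 s F hsm ⟨hσ.1, le_refl F⟩, abs_of_nonpos (by linarith [hsm.2]), neg_sub]
  -- y's bound from lemmaP on reversed γ
  have hy' : infDist y (geoImage (fun t => γ (T - t)) T) = dist y ((fun t => γ (T - t)) 0) := by
    rw [hγ'im, hγ'0]; exact hy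
  have hPy := lemmaP hδ hgeo hslim hγ' hy' (γ 0) (by rw [hγ'im]; exact geo_mem ⟨le_refl 0, hγ.1⟩)
  have hdγT0 : dist (γ T) (γ 0) = T := by rw [dist_comm]; exact hbc
  simp only [sub_zero] at hPy
  rw [hdγT0] at hPy
  -- hPy : dist y (γ T) + T - 8δ ≤ dist y (γ 0)
  rcases hqS with hqγ | hqη
  · -- q on γ : σ s is 6δ-close to γ 0
    obtain ⟨t₂, ht₂, rfl⟩ := hqγ
    have h7 : dist (μ t₁) (γ 0) ≤ dist (μ t₁) (γ t₂) := by
      rw [← hq''proj]; exact infDist_le_dist_of_mem (geo_mem ht₂)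
    have h8 : dist (μ t₁) (γ 0) ≤ 4*δ := h7.trans dq''q
    have h9 : dist (σ s) (γ 0) ≤ 6*δ :=
      calc dist (σ s) (γ 0) ≤ dist (σ s) (μ t₁) + dist (μ t₁) (γ 0) := dist_triangle _ _ _
        _ ≤ 6*δ := by linarith
    have h10 : dist x (γ 0) ≤ s + 6*δ := by
      have := dist_triangle x (σ s) (γ 0)
      linarith [d9]
    have h11 : dist y (γ 0) ≤ (F - s) + 6*δ := by
      have := dist_triangle y (σ s) (γ 0)
      rw [dist_comm y (σ s)] at this
      linarith [d10]
    rw [hfF, dist_comm y (γ T)] at *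
    linarith [hPy, h10, h11, hu]
  · -- q on η : contradiction with T large
    exfalso
    obtain ⟨t₂, ht₂, rfl⟩ := hqη
    have e1 : dist (γ T) (η t₂) = t₂ := by
      rw [← hη0, hη.2 0 t₂ ⟨le_refl 0, hη.1⟩ ht₂, abs_sub_comm, sub_zero, abs_of_nonneg ht₂.1]
    have e2 : dist (η t₂) y = V - t₂ := by
      rw [← hηV, hη.2 t₂ V ht₂ ⟨hη.1, le_refl V⟩, abs_of_nonpos (by linarith [ht₂.2]), neg_sub]
    -- q = η t₂ projects to γ T
    have hqproj : infDist (η t₂) Sγ = dist (η t₂) (γ T) := by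
      apply le_antisymm (infDist_le_dist_of_mem (geo_mem ⟨hγ.1, le_refl T⟩))
      obtain ⟨z, hz, hzd⟩ := hcγ.exists_infDist_eq_dist hnγ (η t₂)
      rw [hzd, dist_comm (η t₂) (γ T), e1]
      have h5 : dist y (γ T) ≤ dist y z := hy ▸ infDist_le_dist_of_mem hz
      have h6 := dist_triangle y (η t₂) z
      have h7 : dist y (η t₂) = V - t₂ := by rw [dist_comm]; exact e2
      have h8 : dist y (γ T) = V := by rw [dist_comm]; exact hv
      linarith
    -- lemmaP for q'' on γ
    have hq''proj' : infDist (μ t₁) (geoImage γ T) = dist (μ t₁) (γ 0) := hq''proj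
    have hP1 := lemmaP hδ hgeo hslim hγ hq''proj' (γ T) (geo_mem ⟨hγ.1, le_refl T⟩)
    rw [hbc] at hP1
    -- lemmaP for q on reversed γ
    have hqproj' : infDist (η t₂) (geoImage (fun t => γ (T - t)) T)
        = dist (η t₂) ((fun t => γ (T - t)) 0) := by
      rw [hγ'im, hγ'0]; exact hqproj
    have hP2 := lemmaP hδ hgeo hslim hγ' hqproj' (γ 0)
      (by rw [hγ'im]; exact geo_mem ⟨le_refl 0, hγ.1⟩)
    simp only [sub_zero] at hP2
    rw [hdγT0] at hP2
    -- triangle bounds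
    have e3 : dist (μ t₁) (γ T) ≤ dist (μ t₁) (η t₂) + dist (η t₂) (γ T) := dist_triangle _ _ _
    have e4 : dist (η t₂) (γ 0) ≤ dist (η t₂) (μ t₁) + dist (μ t₁) (γ 0) := dist_triangle _ _ _
    rw [dist_comm (η t₂) (μ t₁)] at e4
    linarith [dq''q, e3, e4, hP1, hP2, hT, hδ]

lemma geo_dist_le {Z : Type*} [MetricSpace Z] {γ : ℝ → Z} {T : ℝ} (h : IsGeodesicSegment γ T)
    {u v : ℝ} (hu : u ∈ Set.Icc (0:ℝ) T) (hv : v ∈ Set.Icc (0:ℝ) T) (huv : u ≤ v) :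
    dist (γ u) (γ v) = v - u := by
  rw [h.2 u v hu hv, abs_of_nonpos (by linarith), neg_sub]


/-- In a `δ`-hyperbolic geodesic space there exist `D, C₁, K, ε` depending only on `δ`
such that if `d(a,[b,c]) = d(a,b)`, `d(e,[b,c]) = d(c,e)` and `d(b,c) ≥ D`, then the
concatenation `[a,b] ∪ [b,c] ∪ [c,e]` is a `(K,ε)`-quasigeodesic. -/
theorem concat_quasigeodesic {Z : Type*} [MetricSpace Z] (δ : ℝ) (hδ : 0 ≤ δ)
    (hgeo : IsGeodesicSpace Z) (hslim : SlimTriangles Z δ) :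
    ∃ D C₁ K ε : ℝ, 1 ≤ K ∧ 0 ≤ ε ∧
      ∀ (a b c e : Z) (γab γbc γce : ℝ → Z) (Tab Tbc Tce : ℝ),
        IsGeodesicSegment γab Tab → γab 0 = a → γab Tab = b →
        IsGeodesicSegment γbc Tbc → γbc 0 = b → γbc Tbc = c →
        IsGeodesicSegment γce Tce → γce 0 = c → γce Tce = e →
        infDist a (geoImage γbc Tbc) = dist a b →
        infDist e (geoImage γbc Tbc) = dist c e →
        dist b c ≥ D →
        IsQuasigeodesicOn (concat3 γab γbc γce Tab Tbc) (Tab + Tbc + Tce) K ε := by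
  refine ⟨12*δ + 1, 0, 3, 20*δ, by norm_num, by linarith, ?_⟩
  intro a b c e γab γbc γce T₁ T₂ T₃ h1 h10 h1T h2 h20 h2T h3 h30 h3T ha he hD
  have hT₁ : (0:ℝ) ≤ T₁ := h1.1
  have hT₂ : (0:ℝ) ≤ T₂ := h2.1
  have hT₃ : (0:ℝ) ≤ T₃ := h3.1
  have dab : dist a b = T₁ := by
    rw [← h10, ← h1T]; simpa using geo_dist_le h1 ⟨le_refl 0, hT₁⟩ ⟨hT₁, le_refl T₁⟩ hT₁
  have dbc : dist b c = T₂ := by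
    rw [← h20, ← h2T]; simpa using geo_dist_le h2 ⟨le_refl 0, hT₂⟩ ⟨hT₂, le_refl T₂⟩ hT₂
  have dce : dist c e = T₃ := by
    rw [← h30, ← h3T]; simpa using geo_dist_le h3 ⟨le_refl 0, hT₃⟩ ⟨hT₃, le_refl T₃⟩ hT₃
  have hT₂D : 12*δ + 1 ≤ T₂ := by rw [← dbc]; exact hD
  set g := concat3 γab γbc γce T₁ T₂ with hg
  have ev1 : ∀ u, u ≤ T₁ → g u = γab u := by intro u hu; simp only [hg, concat3, if_pos hu]
  have ev2 : ∀ u, ¬(u ≤ T₁) → u ≤ T₁ + T₂ → g u = γbc (u - T₁) := by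
    intro u hu1 hu2; simp only [hg, concat3, if_neg hu1, if_pos hu2]
  have ev3 : ∀ u, ¬(u ≤ T₁ + T₂) → g u = γce (u - T₁ - T₂) := by
    intro u hu2
    have hu1 : ¬(u ≤ T₁) := fun h => hu2 (by linarith [not_le.mp hu2])
    · simp only [hg, concat3, if_neg hu1, if_neg hu2]
  suffices H : ∀ s t, s ∈ Set.Icc (0:ℝ) (T₁ + T₂ + T₃) → t ∈ Set.Icc (0:ℝ) (T₁ + T₂ + T₃) →
      s ≤ t → (1/3) * |s - t| - 20*δ ≤ dist (g s) (g t) ∧ dist (g s) (g t) ≤ 3 * |s - t| + 20*δ by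
    intro s t hs ht
    rcases le_total s t with hst | hst
    · exact H s t hs ht hst
    · obtain ⟨l, u⟩ := H t s ht hs hst
      rw [dist_comm, abs_sub_comm] at l u
      exact ⟨l, u⟩
  intro s t hs ht hst
  have habs : |s - t| = t - s := by rw [abs_sub_comm]; exact abs_of_nonneg (by linarith)
  rw [habs]
  -- projection helper facts
  have projx : ∀ u, u ∈ Set.Icc (0:ℝ) T₁ →
      infDist (γab u) (geoImage γbc T₂) = dist (γab u) (γbc 0) := by
    intro u hu
    apply le_antisymm (infDist_le_dist_of_mem (geo_mem ⟨le_refl 0, hT₂⟩))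
    obtain ⟨z, hz, hzd⟩ := (geo_compact h2).exists_infDist_eq_dist (geo_nonempty h2) (γab u)
    rw [hzd]
    have e1 : dist a (γab u) = u := by
      rw [← h10]; simpa using geo_dist_le h1 ⟨le_refl 0, hT₁⟩ hu hu.1
    have e2 : dist (γab u) (γbc 0) = T₁ - u := by
      rw [h20, ← h1T]; simpa using geo_dist_le h1 hu ⟨hT₁, le_refl T₁⟩ hu.2
    have e3 : dist a b ≤ dist a z := ha ▸ infDist_le_dist_of_mem hz
    have e4 := dist_triangle a (γab u) z
    rw [dab] at e3
    linarith [e1, e2, e3, e4]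
  have projy : ∀ u, u ∈ Set.Icc (0:ℝ) T₃ →
      infDist (γce u) (geoImage γbc T₂) = dist (γce u) (γbc T₂) := by
    intro u hu
    apply le_antisymm (infDist_le_dist_of_mem (geo_mem ⟨hT₂, le_refl T₂⟩))
    obtain ⟨z, hz, hzd⟩ := (geo_compact h2).exists_infDist_eq_dist (geo_nonempty h2) (γce u)
    rw [hzd]
    have e1 : dist (γce u) e = T₃ - u := by
      rw [← h3T]; simpa using geo_dist_le h3 hu ⟨hT₃, le_refl T₃⟩ hu.2
    have e2 : dist (γce u) (γbc T₂) = u := by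
      rw [h2T, ← h30, dist_comm]; simpa using geo_dist_le h3 ⟨le_refl 0, hT₃⟩ hu hu.1
    have e3 : dist c e ≤ dist e z := by
      rw [← he]; exact infDist_le_dist_of_mem hz
    have e4 := dist_triangle e (γce u) z
    have e1' : dist e (γce u) = T₃ - u := by rw [dist_comm]; exact e1
    rw [dce] at e3
    linarith [e1', e2, e3, e4]
  by_cases hs1 : s ≤ T₁
  · have hsmem : s ∈ Set.Icc (0:ℝ) T₁ := ⟨hs.1, hs1⟩
    by_cases ht1 : t ≤ T₁
    · -- case 1 : both on [a,b]
      rw [ev1 s hs1, ev1 t ht1, geo_dist_le h1 hsmem ⟨ht.1, ht1⟩ hst]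
      constructor <;> linarith
    · by_cases ht2 : t ≤ T₁ + T₂
      · -- case 2 : s on [a,b], t on [b,c]
        have htmem : t - T₁ ∈ Set.Icc (0:ℝ) T₂ := ⟨by linarith [not_le.mp ht1], by linarith⟩
        rw [ev1 s hs1, ev2 t ht1 ht2]
        have e1 : dist (γab s) b = T₁ - s := by
          rw [← h1T]; simpa using geo_dist_le h1 hsmem ⟨hT₁, le_refl T₁⟩ hs1
        have e2 : dist b (γbc (t - T₁)) = t - T₁ := by
          rw [← h20]; simpa using geo_dist_le h2 ⟨le_refl 0, hT₂⟩ htmem htmem.1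
        have e3 : dist a (γab s) = s := by
          rw [← h10]; simpa using geo_dist_le h1 ⟨le_refl 0, hT₁⟩ hsmem hs.1
        have e4 : dist a b ≤ dist a (γbc (t - T₁)) := ha ▸ infDist_le_dist_of_mem (geo_mem htmem)
        have e5 := dist_triangle a (γab s) (γbc (t - T₁))
        have e6 := dist_triangle b (γab s) (γbc (t - T₁))
        have e7 := dist_triangle (γab s) b (γbc (t - T₁))
        rw [dab] at e4
        rw [dist_comm b (γab s)] at e6
        constructor <;> linarith
      · -- case 3 : s on [a,b], t on [c,e]  (the hard case)
        have htmem : t - T₁ - T₂ ∈ Set.Icc (0:ℝ) T₃ :=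
          ⟨by linarith [not_le.mp ht2], by linarith [ht.2]⟩
        rw [ev1 s hs1, ev3 t ht2]
        have hx := projx s hsmem
        have hy := projy (t - T₁ - T₂) htmem
        have key := lemmaH hδ hgeo hslim h2 hT₂D hx hy
        have e1 : dist (γab s) (γbc 0) = T₁ - s := by
          rw [h20, ← h1T]; simpa using geo_dist_le h1 hsmem ⟨hT₁, le_refl T₁⟩ hs1
        have e2 : dist (γce (t - T₁ - T₂)) (γbc T₂) = t - T₁ - T₂ := by
          rw [h2T, ← h30, dist_comm]; simpa using geo_dist_le h3 ⟨le_refl 0, hT₃⟩ htmem htmem.1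
        rw [e1, e2] at key
        have e3 := dist_triangle (γab s) (γbc 0) (γce (t - T₁ - T₂))
        have e4 := dist_triangle (γbc 0) (γbc T₂) (γce (t - T₁ - T₂))
        have e5 : dist (γbc 0) (γbc T₂) = T₂ := by
          simpa using geo_dist_le h2 ⟨le_refl 0, hT₂⟩ ⟨hT₂, le_refl T₂⟩ hT₂
        have e6 : dist (γbc T₂) (γce (t - T₁ - T₂)) = t - T₁ - T₂ := by
          rw [dist_comm]; exact e2
        constructor <;> linarith
  · have hs1' : T₁ < s := not_le.mp hs1
    have ht1 : ¬(t ≤ T₁) := not_le.mpr (by linarith)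
    by_cases hs2 : s ≤ T₁ + T₂
    · have hsmem : s - T₁ ∈ Set.Icc (0:ℝ) T₂ := ⟨by linarith, by linarith⟩
      by_cases ht2 : t ≤ T₁ + T₂
      · -- case 4 : both on [b,c]
        have htmem : t - T₁ ∈ Set.Icc (0:ℝ) T₂ := ⟨by linarith, by linarith⟩
        rw [ev2 s hs1 hs2, ev2 t ht1 ht2,
          geo_dist_le h2 hsmem htmem (by linarith)]
        constructor <;> linarith
      · -- case 5 : s on [b,c], t on [c,e]
        have htmem : t - T₁ - T₂ ∈ Set.Icc (0:ℝ) T₃ :=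
          ⟨by linarith [not_le.mp ht2], by linarith [ht.2]⟩
        rw [ev2 s hs1 hs2, ev3 t ht2]
        have e1 : dist (γbc (s - T₁)) c = T₁ + T₂ - s := by
          rw [← h2T]
          have := geo_dist_le h2 hsmem ⟨hT₂, le_refl T₂⟩ (by linarith)
          rw [this]; ring
        have e2 : dist c (γce (t - T₁ - T₂)) = t - T₁ - T₂ := by
          rw [← h30]; simpa using geo_dist_le h3 ⟨le_refl 0, hT₃⟩ htmem htmem.1
        have e3 : dist (γce (t - T₁ - T₂)) e = T₃ - (t - T₁ - T₂) := by
          rw [← h3T]; simpa using geo_dist_le h3 htmem ⟨hT₃, le_refl T₃⟩ htmem.2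
        have e4 : dist c e ≤ dist e (γbc (s - T₁)) := by
          rw [← he]; exact infDist_le_dist_of_mem (geo_mem hsmem)
        have e5 := dist_triangle e (γce (t - T₁ - T₂)) (γbc (s - T₁))
        have e6 := dist_triangle (γbc (s - T₁)) (γce (t - T₁ - T₂)) c
        have e7 := dist_triangle (γbc (s - T₁)) c (γce (t - T₁ - T₂))
        have e3' : dist e (γce (t - T₁ - T₂)) = T₃ - (t - T₁ - T₂) := by
          rw [dist_comm]; exact e3
        rw [dce] at e4
        rw [dist_comm (γce (t - T₁ - T₂)) (γbc (s - T₁))] at e5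
        rw [dist_comm (γce (t - T₁ - T₂)) c] at e6
        constructor <;> linarith [e3']
    · -- case 6 : both on [c,e]
      have ht2 : ¬(t ≤ T₁ + T₂) := not_le.mpr (by linarith [not_le.mp hs2])
      have hsmem : s - T₁ - T₂ ∈ Set.Icc (0:ℝ) T₃ :=
        ⟨by linarith [not_le.mp hs2], by linarith [hs.2]⟩
      have htmem : t - T₁ - T₂ ∈ Set.Icc (0:ℝ) T₃ :=
        ⟨by linarith [not_le.mp ht2], by linarith [ht.2]⟩
      rw [ev3 s hs2, ev3 t ht2, geo_dist_le h3 hsmem htmem (by linarith)]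
      constructor <;> linarith
end

section
/- Let H ≤ G be finitely generated groups with compatible word metrics. If H is not quasi-isometrically embedded in G (i.e. H is distorted), then for every i > 0 there exist points a_i, b_i ∈ H such that every geodesic in the Cayley graph of G from a_i to b_i leaves the i-neighborhood of H. -/
/-- The word length of `g` with respect to a generating set `S`. -/
noncomputable def wordLength {G : Type*} [Group G] (S : Set G) (g : G) : ℕ :=
  sInf {n : ℕ | ∃ l : List G, (∀ x ∈ l, x ∈ S) ∧ l.length = n ∧ l.prod = g}

/-- The word metric on `G` with respect to a generating set `S`. -/
noncomputable def wordDist {G : Type*} [Group G] (S : Set G) (a b : G) : ℕ :=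
  wordLength S (a⁻¹ * b)

/-- `γ 0, …, γ n` is a geodesic path in the Cayley graph of `(G,S)`. -/
def IsGeodesicPath {G : Type*} [Group G] (S : Set G) (γ : ℕ → G) (n : ℕ) : Prop :=
  (∀ i < n, (γ i)⁻¹ * γ (i + 1) ∈ S) ∧ wordDist S (γ 0) (γ n) = n


/-!
Suppose some `i` fails, so that any two points of `H` are joined by a `G`-geodesic whose
vertices all lie within `i` of `H`. Shadowing such a geodesic from `a` to `b` vertex by vertex
with points of `H` gives a chain in `H` whose consecutive points are at `S`-distance at most
`2 i + 1`. The `S`-ball of that radius is finite, so such consecutive points are at bounded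
`T`-distance `M`, and therefore `d_T(a, b) ≤ M d_S(a, b) + 2 M`: `H` would be undistorted.
-/

section WordMetric

variable {G : Type*} [Group G] {S T : Set G} {H : Subgroup G} {g x y a b c d : G}

theorem mem_submonoidClosure_of_mem_closure (hS : ∀ s ∈ S, s⁻¹ ∈ S)
    (hg : g ∈ Subgroup.closure S) : g ∈ Submonoid.closure S := by
  have hSinv : S ∪ S⁻¹ = S := Set.union_eq_left.2 fun s hs => by simpa using hS _ hs
  rwa [← Subgroup.mem_toSubmonoid, Subgroup.closure_toSubmonoid, hSinv] at hg

theorem wordLength_list_prod_le {l : List G} (hl : ∀ x ∈ l, x ∈ S) :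
    wordLength S l.prod ≤ l.length :=
  Nat.sInf_le ⟨l, hl, rfl, rfl⟩

theorem exists_list_length_eq_wordLength (hg : g ∈ Submonoid.closure S) :
    ∃ l : List G, (∀ x ∈ l, x ∈ S) ∧ l.length = wordLength S g ∧ l.prod = g := by
  obtain ⟨l, hl, rfl⟩ := Submonoid.exists_list_of_mem_closure hg
  have hne :
      {n | ∃ l' : List G, (∀ x ∈ l', x ∈ S) ∧ l'.length = n ∧ l'.prod = l.prod}.Nonempty :=
    ⟨l.length, l, hl, rfl, rfl⟩
  exact Nat.sInf_mem hne

theorem wordLength_mul_le (hx : x ∈ Submonoid.closure S) (hy : y ∈ Submonoid.closure S) :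
    wordLength S (x * y) ≤ wordLength S x + wordLength S y := by
  obtain ⟨l₁, hl₁, hlen₁, rfl⟩ := exists_list_length_eq_wordLength hx
  obtain ⟨l₂, hl₂, hlen₂, rfl⟩ := exists_list_length_eq_wordLength hy
  rw [← hlen₁, ← hlen₂, ← List.length_append, ← List.prod_append]
  exact wordLength_list_prod_le fun z hz => (List.mem_append.1 hz).elim (hl₁ z) (hl₂ z)

theorem wordLength_inv (hS : ∀ s ∈ S, s⁻¹ ∈ S) (g : G) :
    wordLength S g⁻¹ = wordLength S g := by
  have hsub : ∀ g : G,
      {n | ∃ l : List G, (∀ x ∈ l, x ∈ S) ∧ l.length = n ∧ l.prod = g} ⊆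
        {n | ∃ l : List G, (∀ x ∈ l, x ∈ S) ∧ l.length = n ∧ l.prod = g⁻¹} := by
    rintro g n ⟨l, hl, rfl, rfl⟩
    refine ⟨(l.map (·⁻¹)).reverse, ?_, by simp, (List.prod_inv_reverse l).symm⟩
    simp only [List.mem_reverse, List.mem_map, forall_exists_index, and_imp,
      forall_apply_eq_imp_iff₂]
    exact fun y hy => hS y (hl y hy)
  unfold wordLength
  congr 1
  exact (Set.Subset.antisymm (hsub g) (by simpa using hsub g⁻¹)).symm

theorem wordDist_comm (hS : ∀ s ∈ S, s⁻¹ ∈ S) (a b : G) :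
    wordDist S a b = wordDist S b a := by
  rw [wordDist, wordDist, ← wordLength_inv hS, mul_inv_rev, inv_inv]

theorem wordDist_triangle (hab : a⁻¹ * b ∈ Submonoid.closure S)
    (hbc : b⁻¹ * c ∈ Submonoid.closure S) :
    wordDist S a c ≤ wordDist S a b + wordDist S b c := by
  have hac : a⁻¹ * c = (a⁻¹ * b) * (b⁻¹ * c) := by group
  rw [wordDist, hac]
  exact wordLength_mul_le hab hbc

theorem wordDist_triangle_of_mem (hS : ∀ h ∈ H, h ∈ Submonoid.closure S)
    (ha : a ∈ H) (hb : b ∈ H) (hc : c ∈ H) :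
    wordDist S a c ≤ wordDist S a b + wordDist S b c :=
  wordDist_triangle (hS _ (H.mul_mem (H.inv_mem ha) hb)) (hS _ (H.mul_mem (H.inv_mem hb) hc))

theorem wordDist_le_add_add_of_mem (hS : ∀ h ∈ H, h ∈ Submonoid.closure S)
    (ha : a ∈ H) (hb : b ∈ H) (hc : c ∈ H) (hd : d ∈ H) :
    wordDist S a d ≤ wordDist S a b + wordDist S b c + wordDist S c d :=
  (wordDist_triangle_of_mem hS ha hc hd).trans
    (Nat.add_le_add_right (wordDist_triangle_of_mem hS ha hb hc) _)

theorem wordDist_le_mul_of_forall_wordDist_succ_le (hS : ∀ h ∈ H, h ∈ Submonoid.closure S)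
    {p : ℕ → G} {n M : ℕ} (hp : ∀ j ≤ n, p j ∈ H)
    (hstep : ∀ j < n, wordDist S (p j) (p (j + 1)) ≤ M) :
    wordDist S (p 0) (p n) ≤ M * n := by
  induction n with
  | zero => simpa [wordDist] using wordLength_list_prod_le (S := S) (l := []) (by simp)
  | succ n ih =>
    calc wordDist S (p 0) (p (n + 1))
        ≤ wordDist S (p 0) (p n) + wordDist S (p n) (p (n + 1)) :=
          wordDist_triangle_of_mem hS (hp 0 (by omega)) (hp n (by omega)) (hp (n + 1) le_rfl)
      _ ≤ M * n + M :=
          add_le_add (ih (fun j hj => hp j (by omega)) fun j hj => hstep j (by omega))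
            (hstep n (by omega))
      _ = M * (n + 1) := by ring

theorem wordDist_le_one (h : a⁻¹ * b ∈ S) : wordDist S a b ≤ 1 := by
  simpa [wordDist] using wordLength_list_prod_le (l := [a⁻¹ * b]) (by simpa using h)

theorem finite_setOf_wordLength_le (hS : S.Finite) (r : ℕ) :
    {g | g ∈ Submonoid.closure S ∧ wordLength S g ≤ r}.Finite := by
  have := hS.to_subtype
  refine ((List.finite_length_le S r).image fun l => (l.map Subtype.val).prod).subset ?_
  rintro g ⟨hg, hr⟩
  obtain ⟨l, hl, hlen, rfl⟩ := exists_list_length_eq_wordLength hg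
  lift l to List S using hl
  exact ⟨l, by simpa using hlen.trans_le hr, rfl⟩

theorem exists_wordDist_le_of_wordDist_le (hS : S.Finite) (T : Set G) (r : ℕ) :
    ∃ M, ∀ a b : G, a⁻¹ * b ∈ Submonoid.closure S → wordDist S a b ≤ r →
      wordDist T a b ≤ M := by
  obtain ⟨M, hM⟩ := ((finite_setOf_wordLength_le hS r).image (wordLength T)).bddAbove
  exact ⟨M, fun a b hab hr => hM ⟨_, ⟨hab, hr⟩, rfl⟩⟩

theorem wordDist_le_of_shadow (hS : ∀ s ∈ S, s⁻¹ ∈ S)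
    (hS_top : ∀ g : G, g ∈ Submonoid.closure S)
    (hT : ∀ h ∈ H, h ∈ Submonoid.closure T) {i M n : ℕ}
    (hM : ∀ a b : G, wordDist S a b ≤ 2 * i + 1 → wordDist T a b ≤ M) {γ p : ℕ → G}
    (hγ : ∀ j < n, (γ j)⁻¹ * γ (j + 1) ∈ S) (hγ₀ : γ 0 ∈ H) (hγₙ : γ n ∈ H)
    (hp : ∀ j ≤ n, p j ∈ H) (hpγ : ∀ j ≤ n, wordDist S (γ j) (p j) ≤ i) :
    wordDist T (γ 0) (γ n) ≤ M * n + 2 * M := by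
  have hstep (j : ℕ) (hj : j < n) : wordDist T (p j) (p (j + 1)) ≤ M := by
    refine hM _ _ ((wordDist_le_add_add_of_mem (H := ⊤) (fun g _ => hS_top g) (Subgroup.mem_top _)
      (Subgroup.mem_top (γ j)) (Subgroup.mem_top (γ (j + 1))) (Subgroup.mem_top _)).trans ?_)
    have := hpγ j hj.le
    have := wordDist_le_one (hγ j hj)
    have := hpγ (j + 1) hj
    rw [wordDist_comm hS (p j)]
    omega
  have hend₀ : wordDist T (γ 0) (p 0) ≤ M := hM _ _ ((hpγ 0 (Nat.zero_le n)).trans (by omega))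
  have hendₙ : wordDist T (p n) (γ n) ≤ M :=
    hM _ _ ((wordDist_comm hS _ _).trans_le ((hpγ n le_rfl).trans (by omega)))
  calc wordDist T (γ 0) (γ n)
      ≤ wordDist T (γ 0) (p 0) + wordDist T (p 0) (p n) + wordDist T (p n) (γ n) :=
        wordDist_le_add_add_of_mem hT hγ₀ (hp 0 (Nat.zero_le n)) (hp n le_rfl) hγₙ
    _ ≤ M + M * n + M := by
        gcongr
        exact wordDist_le_mul_of_forall_wordDist_succ_le hT hp hstep
    _ = M * n + 2 * M := by ring

end WordMetric

theorem distorted_geodesics_leave_neighborhoods_general {G : Type*} [Group G]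
    (S T : Set G) (hSfin : S.Finite)
    (hSsymm : ∀ s ∈ S, s⁻¹ ∈ S) (hTsymm : ∀ t ∈ T, t⁻¹ ∈ T)
    (hSgen : Subgroup.closure S = ⊤)
    (H : Subgroup G) (hHgen : Subgroup.closure T = H)
    (hdistorted : ¬ ∃ K ε : ℝ, 1 ≤ K ∧ 0 ≤ ε ∧ ∀ h₁ h₂ : G, h₁ ∈ H → h₂ ∈ H →
      (wordDist T h₁ h₂ : ℝ) ≤ K * (wordDist S h₁ h₂ : ℝ) + ε) :
    ∀ i : ℕ, ∃ a b : G, a ∈ H ∧ b ∈ H ∧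
      ∀ (γ : ℕ → G) (n : ℕ), IsGeodesicPath S γ n → γ 0 = a → γ n = b →
        ∃ j ≤ n, ∀ h ∈ H, i < wordDist S (γ j) h := by
  have hS_top : ∀ g : G, g ∈ Submonoid.closure S := fun g =>
    mem_submonoidClosure_of_mem_closure hSsymm (hSgen ▸ Subgroup.mem_top g)
  have hT : ∀ h ∈ H, h ∈ Submonoid.closure T := fun h hh =>
    mem_submonoidClosure_of_mem_closure hTsymm (hHgen ▸ hh)
  intro i
  by_contra! hnear
  obtain ⟨M, hM⟩ := exists_wordDist_le_of_wordDist_le hSfin T (2 * i + 1)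
  refine hdistorted ⟨M + 1, 2 * M, by simp, by positivity, fun a b ha hb => ?_⟩
  obtain ⟨γ, n, ⟨hγ, hn⟩, rfl, rfl, hγH⟩ := hnear a b ha hb
  choose! p hp hpγ using hγH
  have hdist :=
    wordDist_le_of_shadow hSsymm hS_top hT (fun a b => hM a b (hS_top _)) hγ ha hb hp hpγ
  rw [hn]
  calc (wordDist T (γ 0) (γ n) : ℝ) ≤ M * n + 2 * M := by exact_mod_cast hdist
    _ ≤ (M + 1) * n + 2 * M := by gcongr; simp

/-- If `H = ⟨T⟩ ≤ G = ⟨S⟩` (finite symmetric generating sets, `T ⊆ S`) is distorted,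
i.e. the inclusion `H → G` is not a quasi-isometric embedding, then for every `i` there
are points `aᵢ, bᵢ ∈ H` such that every geodesic in the Cayley graph of `G` from `aᵢ`
to `bᵢ` leaves the `i`-neighborhood of `H`. -/
theorem distorted_geodesics_leave_neighborhoods {G : Type*} [Group G]
    (S T : Set G) (hTS : T ⊆ S) (hSfin : S.Finite) (hTfin : T.Finite)
    (hSsymm : ∀ s ∈ S, s⁻¹ ∈ S) (hTsymm : ∀ t ∈ T, t⁻¹ ∈ T)
    (hSgen : Subgroup.closure S = ⊤)
    (H : Subgroup G) (hHgen : Subgroup.closure T = H)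
    (hdistorted : ¬ ∃ K ε : ℝ, 1 ≤ K ∧ 0 ≤ ε ∧ ∀ h₁ h₂ : G, h₁ ∈ H → h₂ ∈ H →
      (wordDist T h₁ h₂ : ℝ) ≤ K * (wordDist S h₁ h₂ : ℝ) + ε) :
    ∀ i : ℕ, ∃ a b : G, a ∈ H ∧ b ∈ H ∧
      ∀ (γ : ℕ → G) (n : ℕ), IsGeodesicPath S γ n → γ 0 = a → γ n = b →
        ∃ j ≤ n, ∀ h ∈ H, i < wordDist S (γ j) h :=
  distorted_geodesics_leave_neighborhoods_general S T hSfin hSsymm hTsymm hSgen H hHgen hdistorted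
end
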